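/- Let m = 5, p ≥ 1, and q ∈ ℕ. Let f be a vertex function on C_5^N supported in Σ_{p,q}, and let B denote the internal outer subadjacency B g = 𝟙_{Σ_{p−1,q+1}} · (A_+ g). Then for every vertex w, (A_0 (B f))(w) − (B (A_0 f))(w) = Σ_{ν : d_ν(w) = 2} f((w_ν^-)~_ν), where (w_ν^-)~_ν denotes the ν-reflection of the vertex w_ν^-; that is, the commutator [A_0, B] acts as the twisted outer adjacency on functions supported in Σ_{p,q}. -/

import Mathlib

open Finset

/-- The standard generator `e_k` of `(ZMod m)^N`: equal to `1` in coordinate `k`,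
`0` elsewhere. -/
def eV (N m : ℕ) (k : Fin N) : Fin N → ZMod m :=
  fun j => if j = k then 1 else 0

/-- Adjacency in the Cayley graph `C_m^N`: `v ∼ w` iff `w = v + e_k` or `w = v - e_k`
for some coordinate `k`. -/
def adj (N m : ℕ) (v w : Fin N → ZMod m) : Prop :=
  ∃ k : Fin N, w = v + eV N m k ∨ w = v - eV N m k

/-- The `k`-th level of a vertex: `d_k(v) = min((v k).val, m - (v k).val)`. -/
def lev (N m : ℕ) (v : Fin N → ZMod m) (k : Fin N) : ℕ :=
  min ((v k).val) (m - (v k).val)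

/-- Path distance of a vertex to the origin: `d(v) = Σ_k d_k(v)`. -/
def distO (N m : ℕ) (v : Fin N → ZMod m) : ℕ :=
  ∑ k : Fin N, lev N m v k

open Classical in
/-- Adjacency operator: `(A f)(v) = Σ_{w ∼ v} f(w)`. -/
noncomputable def Aop (N m : ℕ) [NeZero m] (f : (Fin N → ZMod m) → ℂ) :
    (Fin N → ZMod m) → ℂ :=
  fun v => ∑ w : Fin N → ZMod m, if adj N m v w then f w else 0

open Classical in
/-- Outer adjacency: `(A₊ f)(v) = Σ_{w ∼ v, d(w) < d(v)} f(w)`. -/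
noncomputable def Aplus (N m : ℕ) [NeZero m] (f : (Fin N → ZMod m) → ℂ) :
    (Fin N → ZMod m) → ℂ :=
  fun v => ∑ w : Fin N → ZMod m,
    if adj N m v w ∧ distO N m w < distO N m v then f w else 0

open Classical in
/-- Inner adjacency: `(A₋ f)(v) = Σ_{w ∼ v, d(w) > d(v)} f(w)`. -/
noncomputable def Aminus (N m : ℕ) [NeZero m] (f : (Fin N → ZMod m) → ℂ) :
    (Fin N → ZMod m) → ℂ :=
  fun v => ∑ w : Fin N → ZMod m,
    if adj N m v w ∧ distO N m v < distO N m w then f w else 0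

open Classical in
/-- Neutral adjacency: `(A₀ f)(v) = Σ_{w ∼ v, d(w) = d(v)} f(w)`. -/
noncomputable def Azero (N m : ℕ) [NeZero m] (f : (Fin N → ZMod m) → ℂ) :
    (Fin N → ZMod m) → ℂ :=
  fun v => ∑ w : Fin N → ZMod m,
    if adj N m v w ∧ distO N m w = distO N m v then f w else 0

/-- The `k`-reflection `ṽ_k` of a vertex: negate the `k`-th coordinate. -/
def reflV (N m : ℕ) (k : Fin N) (v : Fin N → ZMod m) : Fin N → ZMod m :=
  Function.update v k (-(v k))

/-- Level-one reflection sum: `(R₁ f)(v) = Σ_{k : d_k(v) = 1} f(ṽ_k)`. -/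
noncomputable def R1 (N m : ℕ) (f : (Fin N → ZMod m) → ℂ) :
    (Fin N → ZMod m) → ℂ :=
  fun v => ∑ k ∈ Finset.univ.filter (fun k => lev N m v k = 1), f (reflV N m k v)

/-- Number of coordinates of `v` at level `ℓ`. -/
def cardLev (N m : ℕ) (v : Fin N → ZMod m) (ℓ : ℕ) : ℕ :=
  (Finset.univ.filter (fun k => lev N m v k = ℓ)).card

/-- For a vertex `v` of `C_5^N` with `d_ν(v) = 2`, the vertex `v_ν⁻` agreeing with
`v` off coordinate `ν` with level `1` there, of the same sign (value `2` becomes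
`1`; value `3` becomes `4`). -/
def vmin (N : ℕ) (v : Fin N → ZMod 5) (ν : Fin N) : Fin N → ZMod 5 :=
  Function.update v ν (if (v ν).val = 2 then 1 else 4)

open Classical in
/-- The internal outer subadjacency `B g = 𝟙_{Σ_{p-1,q+1}} ⬝ (A₊ g)`. -/
noncomputable def Bop (N p q : ℕ) (g : (Fin N → ZMod 5) → ℂ) :
    (Fin N → ZMod 5) → ℂ :=
  fun v => if cardLev N 5 v 1 + 1 = p ∧ cardLev N 5 v 2 = q + 1
    then Aplus N 5 g v else 0

/-!
On `C_5` the neighbours of a vertex at the same distance from the origin are exactly its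
reflections in the coordinates of level `2`, and the neighbours closer to the origin are obtained
by lowering one nonzero coordinate by one level. Reflections preserve all levels and commute with
lowering a nonzero coordinate. For `w ∈ Σ_{p-1,q+1}`, lowering a coordinate of level `1` leads to
`Σ_{p-2,·}`, off the support of `f`; hence `A₀ (B f) w` and `B (A₀ f) w` are both sums of
`f ((w_j⁻)~_k)` over coordinates `j, k` of level `2`, the second one only over `k ≠ j` because
`w_j⁻` has level `1` at `j`. Their difference is the diagonal `j = k`. For `w ∉ Σ_{p-1,q+1}` both
sides vanish, since `(w_ν⁻)~_ν ∈ Σ_{p,q}` forces `w ∈ Σ_{p-1,q+1}`.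
-/

open Function

def levOf (m : ℕ) (a : ZMod m) : ℕ := min a.val (m - a.val)

section Levels

variable {N m : ℕ}

theorem lev_eq_levOf (v : Fin N → ZMod m) (k : Fin N) : lev N m v k = levOf m (v k) := rfl

theorem levOf_neg [NeZero m] (a : ZMod m) : levOf m (-a) = levOf m a := by
  unfold levOf
  rw [ZMod.neg_val]
  split_ifs with h
  · simp [h]
  · have := ZMod.val_lt a
    omega

theorem lev_update (v : Fin N → ZMod m) (k : Fin N) (b : ZMod m) :
    lev N m (update v k b) = update (lev N m v) k (levOf m b) :=
  funext fun j => apply_update (fun _ => levOf m) v k b j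

theorem distO_update_add (v : Fin N → ZMod m) (k : Fin N) (b : ZMod m) :
    distO N m (update v k b) + lev N m v k = distO N m v + levOf m b := by
  unfold distO
  rw [lev_update, sum_update_of_mem (mem_univ k),
    sum_eq_add_sum_sdiff_singleton_of_mem (mem_univ k) (lev N m v)]
  ring

theorem cardLev_update_add (v : Fin N → ZMod m) (k : Fin N) (b : ZMod m) (ℓ : ℕ) :
    cardLev N m (update v k b) ℓ + (if lev N m v k = ℓ then 1 else 0)
      = cardLev N m v ℓ + (if levOf m b = ℓ then 1 else 0) := by
  have hind : (fun j => if update (lev N m v) k (levOf m b) j = ℓ then 1 else 0)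
      = update (fun j => if lev N m v j = ℓ then 1 else 0) k (if levOf m b = ℓ then 1 else 0) :=
    funext fun j => apply_update (fun _ n => if n = ℓ then 1 else 0) (lev N m v) k _ j
  simp only [cardLev, card_filter, lev_update]
  rw [hind, sum_update_of_mem (mem_univ k),
    sum_eq_add_sum_sdiff_singleton_of_mem (mem_univ k) (fun j => if lev N m v j = ℓ then 1 else 0)]
  ring

theorem lev_reflV [NeZero m] (k : Fin N) (v : Fin N → ZMod m) :
    lev N m (reflV N m k v) = lev N m v := by
  rw [reflV, lev_update, levOf_neg]
  exact update_eq_self k _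

theorem cardLev_reflV [NeZero m] (k : Fin N) (v : Fin N → ZMod m) (ℓ : ℕ) :
    cardLev N m (reflV N m k v) ℓ = cardLev N m v ℓ := by
  simp only [cardLev, lev_reflV]

end Levels

section Neighbours

variable {N m : ℕ}

theorem add_eV_eq_update (v : Fin N → ZMod m) (k : Fin N) :
    v + eV N m k = update v k (v k + 1) := by
  funext j
  by_cases h : j = k
  · subst h; simp [eV]
  · simp [eV, h]

theorem sub_eV_eq_update (v : Fin N → ZMod m) (k : Fin N) :
    v - eV N m k = update v k (v k - 1) := by
  funext j
  by_cases h : j = k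
  · subst h; simp [eV]
  · simp [eV, h]

theorem adj_iff_exists_update (v w : Fin N → ZMod m) :
    adj N m v w ↔ ∃ k b, (b = v k + 1 ∨ b = v k - 1) ∧ w = update v k b := by
  simp only [adj, add_eV_eq_update, sub_eV_eq_update]
  constructor
  · rintro ⟨k, h | h⟩
    · exact ⟨k, _, .inl rfl, h⟩
    · exact ⟨k, _, .inr rfl, h⟩
  · rintro ⟨k, b, rfl | rfl, rfl⟩
    · exact ⟨k, .inl rfl⟩
    · exact ⟨k, .inr rfl⟩

open Classical in
theorem sum_adj_distO_eq_sum_update [NeZero m] (r : ℕ → ℕ → Prop) [DecidableRel r]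
    (hr : ∀ x y c, r (x + c) (y + c) ↔ r x y) (P : ZMod m → Prop) [DecidablePred P]
    (step : ZMod m → ZMod m)
    (hstep : ∀ a b, (b = a + 1 ∨ b = a - 1) ∧ r (levOf m b) (levOf m a) ↔ P a ∧ b = step a)
    (hne : ∀ a, P a → step a ≠ a) (f : (Fin N → ZMod m) → ℂ) (v : Fin N → ZMod m) :
    ∑ w, (if adj N m v w ∧ r (distO N m w) (distO N m v) then f w else 0)
      = ∑ k ∈ univ.filter (fun k => P (v k)), f (update v k (step (v k))) := by
  have hdist : ∀ k b,
      r (distO N m (update v k b)) (distO N m v) ↔ r (levOf m b) (levOf m (v k)) := by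
    intro k b
    rw [← hr _ _ (lev N m v k), distO_update_add, add_comm (distO N m v),
      add_comm (distO N m v), hr, lev_eq_levOf]
  have hinj : Set.InjOn (fun k => update v k (step (v k))) (univ.filter fun k => P (v k)) := by
    intro x hx y _ hxy
    by_contra hxy_ne
    have := congrFun hxy x
    simp only [update_self, update_of_ne hxy_ne] at this
    exact hne _ (mem_filter.1 hx).2 this
  rw [← sum_filter, ← sum_image hinj]
  congr 1
  ext w
  simp only [mem_filter, mem_univ, true_and, mem_image, adj_iff_exists_update]
  constructor
  · rintro ⟨⟨k, b, hb, rfl⟩, hd⟩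
    obtain ⟨hP, rfl⟩ := (hstep _ _).1 ⟨hb, (hdist k b).1 hd⟩
    exact ⟨k, hP, rfl⟩
  · rintro ⟨k, hP, rfl⟩
    obtain ⟨hb, hd⟩ := (hstep _ _).2 ⟨hP, rfl⟩
    exact ⟨⟨k, _, hb, rfl⟩, (hdist _ _).2 hd⟩

end Neighbours

/-- One step towards `0`; meaningless at `a = 0`. -/
def lower (a : ZMod 5) : ZMod 5 := if a.val ≤ 2 then a - 1 else a + 1

def lowerAt {N : ℕ} (v : Fin N → ZMod 5) (k : Fin N) : Fin N → ZMod 5 :=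
  update v k (lower (v k))

section FiveCycle

variable {N : ℕ}

theorem lev_le_two (v : Fin N → ZMod 5) (k : Fin N) : lev N 5 v k ≤ 2 :=
  (by decide : ∀ a : ZMod 5, levOf 5 a ≤ 2) (v k)

theorem levOf_lower {a : ZMod 5} (ha : 1 ≤ levOf 5 a) : levOf 5 (lower a) = levOf 5 a - 1 :=
  (by decide : ∀ a : ZMod 5, 1 ≤ levOf 5 a → levOf 5 (lower a) = levOf 5 a - 1) a ha

theorem vmin_eq_lowerAt {v : Fin N → ZMod 5} {k : Fin N} (hk : lev N 5 v k = 2) :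
    vmin N v k = lowerAt v k :=
  congrArg (update v k) ((by decide : ∀ a : ZMod 5, levOf 5 a = 2 →
    (if a.val = 2 then (1 : ZMod 5) else 4) = lower a) _ hk)

theorem lowerAt_reflV {v : Fin N → ZMod 5} {j : Fin N} (hj : 1 ≤ lev N 5 v j) (k : Fin N) :
    lowerAt (reflV N 5 k v) j = reflV N 5 k (lowerAt v j) := by
  unfold lowerAt reflV
  by_cases hjk : j = k
  · subst hjk
    simp only [update_self, update_idem]
    rw [(by decide : ∀ a : ZMod 5, 1 ≤ levOf 5 a → lower (-a) = -lower a) _ hj]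
  · rw [update_of_ne hjk, update_of_ne (Ne.symm hjk), update_comm hjk]

theorem Azero_eq_sum_reflV (f : (Fin N → ZMod 5) → ℂ) (v : Fin N → ZMod 5) :
    Azero N 5 f v = ∑ k ∈ univ.filter (fun k => lev N 5 v k = 2), f (reflV N 5 k v) :=
  sum_adj_distO_eq_sum_update (· = ·) (fun _ _ c => add_left_inj c)
    (fun a => levOf 5 a = 2) Neg.neg (by decide) (by decide) f v

theorem Aplus_eq_sum_lowerAt (f : (Fin N → ZMod 5) → ℂ) (v : Fin N → ZMod 5) :
    Aplus N 5 f v = ∑ k ∈ univ.filter (fun k => 1 ≤ lev N 5 v k), f (lowerAt v k) :=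
  sum_adj_distO_eq_sum_update (· < ·) (fun _ _ c => add_lt_add_iff_right c)
    (fun a => 1 ≤ levOf 5 a) lower (by decide) (by decide) f v

theorem cardLev_lowerAt_of_lev_eq_one {v : Fin N → ZMod 5} {j : Fin N} (hj : lev N 5 v j = 1) :
    cardLev N 5 (lowerAt v j) 1 + 1 = cardLev N 5 v 1 := by
  have h := cardLev_update_add v j (lower (v j)) 1
  rw [levOf_lower hj.ge, ← lev_eq_levOf, hj] at h
  simpa [lowerAt] using h

theorem cardLev_lowerAt_of_lev_eq_two {v : Fin N → ZMod 5} {j : Fin N} (hj : lev N 5 v j = 2) :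
    cardLev N 5 (lowerAt v j) 1 = cardLev N 5 v 1 + 1 ∧
      cardLev N 5 (lowerAt v j) 2 + 1 = cardLev N 5 v 2 := by
  have h1 := cardLev_update_add v j (lower (v j)) 1
  have h2 := cardLev_update_add v j (lower (v j)) 2
  rw [levOf_lower (by rw [← lev_eq_levOf]; omega), ← lev_eq_levOf, hj] at h1 h2
  simp only [OfNat.ofNat_ne_one, OfNat.one_ne_ofNat, ↓reduceIte, add_zero, Nat.add_one_sub_one]
    at h1 h2
  simp only [lowerAt]
  omega

theorem filter_lev_lowerAt_eq_erase {v : Fin N → ZMod 5} {j : Fin N} (hj : lev N 5 v j = 2) :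
    univ.filter (fun k => lev N 5 (lowerAt v j) k = 2)
      = (univ.filter (fun k => lev N 5 v k = 2)).erase j := by
  ext k
  by_cases hkj : k = j
  · subst hkj
    simp [lowerAt, lev_update, levOf_lower, ← lev_eq_levOf, hj]
  · simp [lowerAt, lev_update, hkj]

end FiveCycle

section Commutator

variable {N p q : ℕ} {f : (Fin N → ZMod 5) → ℂ}

theorem Aplus_eq_sum_lev_eq_two (g : (Fin N → ZMod 5) → ℂ) (v : Fin N → ZMod 5)
    (hg : ∀ j, lev N 5 v j = 1 → g (lowerAt v j) = 0) :
    Aplus N 5 g v = ∑ j ∈ univ.filter (fun j => lev N 5 v j = 2), g (lowerAt v j) := by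
  rw [Aplus_eq_sum_lowerAt]
  refine (sum_subset (fun j hj => ?_) fun j hj hj2 => hg j ?_).symm
  · simp only [mem_filter, mem_univ, true_and] at hj ⊢
    omega
  · simp only [mem_filter, mem_univ, true_and] at hj hj2
    have := lev_le_two v j
    omega

theorem reflV_lowerAt_eq_zero
    (hf : ∀ v, ¬(cardLev N 5 v 1 = p ∧ cardLev N 5 v 2 = q) → f v = 0)
    {w : Fin N → ZMod 5} (hw : cardLev N 5 w 1 + 1 = p) {j : Fin N} (hj : lev N 5 w j = 1)
    (k : Fin N) : f (reflV N 5 k (lowerAt w j)) = 0 := by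
  refine hf _ fun h => ?_
  have := cardLev_lowerAt_of_lev_eq_one hj
  rw [cardLev_reflV] at h
  omega

theorem Azero_Bop_eq_sum
    (hf : ∀ v, ¬(cardLev N 5 v 1 = p ∧ cardLev N 5 v 2 = q) → f v = 0)
    {w : Fin N → ZMod 5} (hw : cardLev N 5 w 1 + 1 = p ∧ cardLev N 5 w 2 = q + 1) :
    Azero N 5 (Bop N p q f) w = ∑ j ∈ univ.filter (fun j => lev N 5 w j = 2),
      ∑ k ∈ univ.filter (fun k => lev N 5 w k = 2), f (reflV N 5 k (lowerAt w j)) := by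
  rw [Azero_eq_sum_reflV, sum_comm]
  refine sum_congr rfl fun k _ => ?_
  have hwk : cardLev N 5 (reflV N 5 k w) 1 + 1 = p ∧ cardLev N 5 (reflV N 5 k w) 2 = q + 1 := by
    simpa only [cardLev_reflV] using hw
  rw [Bop, if_pos hwk, Aplus_eq_sum_lev_eq_two]
  · simp only [lev_reflV]
    exact sum_congr rfl fun j hj => by
      rw [lowerAt_reflV (by rw [(mem_filter.1 hj).2]; omega)]
  · intro j hj
    rw [lev_reflV] at hj
    rw [lowerAt_reflV (by omega), reflV_lowerAt_eq_zero hf hw.1 hj]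

theorem Bop_Azero_eq_sum
    (hf : ∀ v, ¬(cardLev N 5 v 1 = p ∧ cardLev N 5 v 2 = q) → f v = 0)
    {w : Fin N → ZMod 5} (hw : cardLev N 5 w 1 + 1 = p ∧ cardLev N 5 w 2 = q + 1) :
    Bop N p q (Azero N 5 f) w = ∑ j ∈ univ.filter (fun j => lev N 5 w j = 2),
      ∑ k ∈ (univ.filter (fun k => lev N 5 w k = 2)).erase j, f (reflV N 5 k (lowerAt w j)) := by
  rw [Bop, if_pos hw, Aplus_eq_sum_lev_eq_two]
  · exact sum_congr rfl fun j hj => by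
      rw [Azero_eq_sum_reflV, filter_lev_lowerAt_eq_erase (mem_filter.1 hj).2]
  · intro j hj
    rw [Azero_eq_sum_reflV]
    exact sum_eq_zero fun k _ => reflV_lowerAt_eq_zero hf hw.1 hj k

theorem Azero_Bop_eq_zero {w : Fin N → ZMod 5}
    (hw : ¬(cardLev N 5 w 1 + 1 = p ∧ cardLev N 5 w 2 = q + 1)) :
    Azero N 5 (Bop N p q f) w = 0 := by
  rw [Azero_eq_sum_reflV]
  refine sum_eq_zero fun k _ => ?_
  rw [Bop, if_neg (by simpa only [cardLev_reflV] using hw)]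

end Commutator

theorem twisted_outer_adjacency_C5_general (N p q : ℕ)
    (f : (Fin N → ZMod 5) → ℂ)
    (hf : ∀ v, ¬(cardLev N 5 v 1 = p ∧ cardLev N 5 v 2 = q) → f v = 0) :
    ∀ w, Azero N 5 (Bop N p q f) w - Bop N p q (Azero N 5 f) w
      = ∑ ν ∈ Finset.univ.filter (fun ν => lev N 5 w ν = 2),
          f (reflV N 5 ν (vmin N w ν)) := by
  intro w
  by_cases hw : cardLev N 5 w 1 + 1 = p ∧ cardLev N 5 w 2 = q + 1
  · rw [Azero_Bop_eq_sum hf hw, Bop_Azero_eq_sum hf hw, ← sum_sub_distrib]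
    refine sum_congr rfl fun j hj => ?_
    rw [← add_sum_erase _ _ hj, add_sub_cancel_right, vmin_eq_lowerAt (mem_filter.1 hj).2]
  · rw [Azero_Bop_eq_zero hw, Bop, if_neg hw, sub_zero]
    refine (sum_eq_zero fun ν hν => hf _ fun h => hw ?_).symm
    have hν2 := (mem_filter.1 hν).2
    have := cardLev_lowerAt_of_lev_eq_two hν2
    rw [vmin_eq_lowerAt hν2, cardLev_reflV, cardLev_reflV] at h
    omega

/-- on `C_5^N`, for `f` supported in `Σ_{p,q}` (`p ≥ 1`), the
commutator `[A₀, B]` acts as the twisted outer adjacency: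
`(A₀ (B f))(w) - (B (A₀ f))(w) = Σ_{ν : d_ν(w)=2} f((w_ν⁻)~_ν)`. -/
theorem twisted_outer_adjacency_C5 (N p q : ℕ) (hN : 1 ≤ N) (hp : 1 ≤ p)
    (f : (Fin N → ZMod 5) → ℂ)
    (hf : ∀ v, ¬(cardLev N 5 v 1 = p ∧ cardLev N 5 v 2 = q) → f v = 0) :
    ∀ w, Azero N 5 (Bop N p q f) w - Bop N p q (Azero N 5 f) w
      = ∑ ν ∈ Finset.univ.filter (fun ν => lev N 5 w ν = 2),
          f (reflV N 5 ν (vmin N w ν)) :=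
  twisted_outer_adjacency_C5_general N p q f hf
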